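/- For the Lie algebra W₁ of formal vector fields on the line, the trilinear functional φ(f∂ₓ, g∂ₓ, h∂ₓ) = det of the 3×3 matrix of 0th, 1st, and 2nd derivatives of f, g, h at 0 is a 3-cocycle that is not a coboundary: there is no continuous alternating bilinear functional ψ on W₁ whose Chevalley–Eilenberg differential equals φ. -/

import Mathlib

/- STATEMENT 7: For W₁, the determinant trilinear functional φ is a 3-cocycle which is NOT a
coboundary: there is no continuous alternating bilinear functional ψ on W₁ whose
Chevalley–Eilenberg differential equals φ. (Its class generates H³(W₁;ℂ).) -/

open PowerSeries

/-- W₁ = ℂ[[x]]∂ₓ : a formal vector field on the line is recorded by its coefficient f ∈ ℂ[[x]] -/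
abbrev W1 := PowerSeries ℂ

/-- formal derivative f ↦ f' -/
noncomputable def D (f : W1) : W1 := PowerSeries.derivative ℂ f

/-- evaluation at the origin -/
noncomputable def ev0 (f : W1) : ℂ := PowerSeries.constantCoeff f

/-- the bracket [f∂ₓ, g∂ₓ] = (fg' − f'g)∂ₓ of formal vector fields on the line -/
noncomputable def brW (f g : W1) : W1 := f * D g - D f * g

/-- the Gelfand–Fuks determinant 3-cochain
φ(f∂ₓ, g∂ₓ, h∂ₓ) = det [[f(0), g(0), h(0)], [f'(0), g'(0), h'(0)], [f''(0), g''(0), h''(0)]] -/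
noncomputable def gfCocycle (f g h : W1) : ℂ :=
  Matrix.det !![ev0 f, ev0 g, ev0 h;
                ev0 (D f), ev0 (D g), ev0 (D h);
                ev0 (D (D f)), ev0 (D (D g)), ev0 (D (D h))]

/-- ψ depends only on finitely many Taylor coefficients of its arguments (continuity) -/
def Continuous2 (ψ : W1 → W1 → ℂ) : Prop :=
  ∃ N : ℕ, ∀ f₁ f₂ g : W1,
    (∀ k ≤ N, PowerSeries.coeff k f₁ = PowerSeries.coeff k f₂) →
      ψ f₁ g = ψ f₂ g ∧ ψ g f₁ = ψ g f₂

/-- ψ is bilinear -/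
def Bilinear2 (ψ : W1 → W1 → ℂ) : Prop :=
  (∀ f₁ f₂ g, ψ (f₁ + f₂) g = ψ f₁ g + ψ f₂ g) ∧
  (∀ (c : ℂ) f g, ψ (c • f) g = c * ψ f g) ∧
  (∀ f g₁ g₂, ψ f (g₁ + g₂) = ψ f g₁ + ψ f g₂) ∧
  (∀ (c : ℂ) f g, ψ f (c • g) = c * ψ f g)

lemma D_mul (f g : W1) : D (f * g) = f * D g + D f * g := by
  simp [D, Derivation.leibniz, smul_eq_mul]; ring

lemma D_add (f g : W1) : D (f + g) = D f + D g := map_add _ f g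
lemma D_sub (f g : W1) : D (f - g) = D f - D g := map_sub _ f g
lemma ev0_mul (f g : W1) : ev0 (f * g) = ev0 f * ev0 g := map_mul _ f g
lemma ev0_sub (f g : W1) : ev0 (f - g) = ev0 f - ev0 g := map_sub _ f g
lemma ev0_add (f g : W1) : ev0 (f + g) = ev0 f + ev0 g := map_add _ f g

lemma ev0_brW (f g : W1) : ev0 (brW f g) = ev0 f * ev0 (D g) - ev0 (D f) * ev0 g := by
  simp [brW, ev0_sub, ev0_mul]

lemma ev0_D_brW (f g : W1) :
    ev0 (D (brW f g)) = ev0 f * ev0 (D (D g)) - ev0 (D (D f)) * ev0 g := by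
  simp [brW, D_sub, D_add, D_mul, ev0_sub, ev0_add, ev0_mul]; ring

lemma ev0_DD_brW (f g : W1) :
    ev0 (D (D (brW f g))) = ev0 (D f) * ev0 (D (D g)) + ev0 f * ev0 (D (D (D g)))
      - ev0 (D (D (D f))) * ev0 g - ev0 (D (D f)) * ev0 (D g) := by
  simp [brW, D_sub, D_add, D_mul, ev0_sub, ev0_add, ev0_mul]; ring

lemma brW_one_X : brW 1 X = 1 := by
  simp [brW, D]

lemma D_X_sq : D (X ^ 2 : W1) = X + X := by
  have : (X ^ 2 : W1) = X * X := sq X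
  rw [this, D_mul]
  simp [D]

lemma brW_one_X2 : brW 1 (X ^ 2) = X + X := by
  simp [brW, D_X_sq, D]
  ring

lemma brW_X_X2 : brW X (X ^ 2) = X ^ 2 := by
  rw [brW, D_X_sq]
  simp [D]
  ring

lemma det3 (a b c d e f g h i : ℂ) :
    Matrix.det !![a, b, c; d, e, f; g, h, i]
      = a*e*i - a*f*h - b*d*i + b*f*g + c*d*h - c*e*g := by
  simp [Matrix.det_fin_three]

lemma gf_eq (f g h : W1) : gfCocycle f g h
    = ev0 f * ev0 (D g) * ev0 (D (D h)) - ev0 f * ev0 (D h) * ev0 (D (D g))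
      - ev0 g * ev0 (D f) * ev0 (D (D h)) + ev0 g * ev0 (D h) * ev0 (D (D f))
      + ev0 h * ev0 (D f) * ev0 (D (D g)) - ev0 h * ev0 (D g) * ev0 (D (D f)) := by
  rw [gfCocycle, det3]

lemma gf_val : gfCocycle 1 X (X ^ 2) = 2 := by
  rw [gf_eq]
  simp [ev0, D_X_sq, D_add, D, map_ofNat]

set_option maxHeartbeats 1000000 in
theorem stmt7 :
    -- φ is a 3-cocycle …
    (∀ X0 X1 X2 X3 : W1,
      - gfCocycle (brW X0 X1) X2 X3
      + gfCocycle (brW X0 X2) X1 X3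
      - gfCocycle (brW X0 X3) X1 X2
      - gfCocycle (brW X1 X2) X0 X3
      + gfCocycle (brW X1 X3) X0 X2
      - gfCocycle (brW X2 X3) X0 X1 = 0) ∧
    -- … but not a coboundary: no continuous alternating bilinear ψ has d_CE ψ = φ
    ¬ ∃ ψ : W1 → W1 → ℂ, Bilinear2 ψ ∧ (∀ f g, ψ f g = -ψ g f) ∧ Continuous2 ψ ∧
        ∀ X0 X1 X2 : W1,
          - ψ (brW X0 X1) X2 + ψ (brW X0 X2) X1 - ψ (brW X1 X2) X0
            = gfCocycle X0 X1 X2 := by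
  constructor
  · intro X0 X1 X2 X3
    simp only [gf_eq, ev0_brW, ev0_D_brW, ev0_DD_brW]
    ring
  · rintro ⟨ψ, ⟨hadd, hsmul, -, -⟩, hanti, -, hd⟩
    have hXX : ψ X X = 0 := by linear_combination ((1:ℂ)/2) * hanti X X
    have h := hd 1 X (X ^ 2)
    rw [brW_one_X, brW_one_X2, brW_X_X2, gf_val, hadd, hXX, hanti (X ^ 2) 1] at h
    simp at h
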